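/- Let 𝔪, a, r, θ be real numbers with Δ := r² − 2𝔪r + a² ≠ 0 and ϱ² := r² + a²cos²θ ≠ 0. Let A = (Δ/ϱ²)·u uᵀ − (ϱ²/Δ)·e₁ e₁ᵀ − ϱ²·e₂ e₂ᵀ − (sin²θ/ϱ²)·w wᵀ and B = (Δ/ϱ²)·u uᵀ − u e₁ᵀ − e₁ uᵀ − ϱ²·e₂ e₂ᵀ − (sin²θ/ϱ²)·w wᵀ, where u = (1, 0, 0, −a sin²θ)ᵀ, w = (a, 0, 0, −(r²+a²))ᵀ, e₁ = (0,1,0,0)ᵀ, e₂ = (0,0,1,0)ᵀ. Let J be the 4×4 matrix equal to the identity except for the entries J₁₂ = −(r²+a²)/Δ and J₄₂ = −a/Δ (rows and columns indexed 1 to 4). Then Jᵀ A J = B. -/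

import Mathlib

set_option maxHeartbeats 2000000


open Matrix Real

/-- The coordinate matrix of the Kerr metric in Boyer–Lindquist coordinates
`(t, r, θ, φ)` with mass `𝔪` and specific angular momentum `a`. -/
noncomputable def kerrBL (𝔪 a r θ : ℝ) : Matrix (Fin 4) (Fin 4) ℝ :=
  let Δ : ℝ := r ^ 2 - 2 * 𝔪 * r + a ^ 2
  let ϱ2 : ℝ := r ^ 2 + a ^ 2 * Real.cos θ ^ 2
  let u : Fin 4 → ℝ := ![1, 0, 0, -(a * Real.sin θ ^ 2)]
  let w : Fin 4 → ℝ := ![a, 0, 0, -(r ^ 2 + a ^ 2)]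
  let e1 : Fin 4 → ℝ := ![0, 1, 0, 0]
  let e2 : Fin 4 → ℝ := ![0, 0, 1, 0]
  (Δ / ϱ2) • vecMulVec u u - (ϱ2 / Δ) • vecMulVec e1 e1
    - ϱ2 • vecMulVec e2 e2 - (Real.sin θ ^ 2 / ϱ2) • vecMulVec w w

/-- The coordinate matrix of the Kerr metric in the regular coordinates
`(t_*, r, θ, φ_*)`, smooth across the event horizon. -/
noncomputable def kerrStar (𝔪 a r θ : ℝ) : Matrix (Fin 4) (Fin 4) ℝ :=
  let Δ : ℝ := r ^ 2 - 2 * 𝔪 * r + a ^ 2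
  let ϱ2 : ℝ := r ^ 2 + a ^ 2 * Real.cos θ ^ 2
  let u : Fin 4 → ℝ := ![1, 0, 0, -(a * Real.sin θ ^ 2)]
  let w : Fin 4 → ℝ := ![a, 0, 0, -(r ^ 2 + a ^ 2)]
  let e1 : Fin 4 → ℝ := ![0, 1, 0, 0]
  let e2 : Fin 4 → ℝ := ![0, 0, 1, 0]
  (Δ / ϱ2) • vecMulVec u u - vecMulVec u e1 - vecMulVec e1 u
    - ϱ2 • vecMulVec e2 e2 - (Real.sin θ ^ 2 / ϱ2) • vecMulVec w w

private lemma vmv_mul (x y z w : Fin 4 → ℝ) :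
    vecMulVec x y * vecMulVec z w = (y ⬝ᵥ z) • vecMulVec x w := by
  ext i j
  simp [Matrix.mul_apply, vecMulVec_apply, dotProduct, Fin.sum_univ_four]
  ring

private lemma vmv_transpose (x y : Fin 4 → ℝ) :
    (vecMulVec x y)ᵀ = vecMulVec y x := by
  ext i j; simp [vecMulVec_apply, mul_comm]

/-- The Jacobian `J` of the change of coordinates from Boyer–Lindquist
coordinates `(t, r, θ, φ)` to the regular coordinates `(t_*, r, θ, φ_*)`
transforms the Boyer–Lindquist form `A` of the Kerr metric into the regular
form `B`: `Jᵀ A J = B`. -/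
theorem kerrBL_congruent_kerrStar (𝔪 a r θ : ℝ)
    (hΔ : r ^ 2 - 2 * 𝔪 * r + a ^ 2 ≠ 0)
    (hϱ : r ^ 2 + a ^ 2 * Real.cos θ ^ 2 ≠ 0) :
    let Δ : ℝ := r ^ 2 - 2 * 𝔪 * r + a ^ 2
    let J : Matrix (Fin 4) (Fin 4) ℝ :=
      !![1, -((r ^ 2 + a ^ 2) / Δ), 0, 0;
         0, 1, 0, 0;
         0, 0, 1, 0;
         0, -(a / Δ), 0, 1]
    Jᵀ * kerrBL 𝔪 a r θ * J = kerrStar 𝔪 a r θ := by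
  intro Δ J
  set ϱ2 : ℝ := r ^ 2 + a ^ 2 * Real.cos θ ^ 2 with hϱ2
  set u : Fin 4 → ℝ := ![1, 0, 0, -(a * Real.sin θ ^ 2)] with hu
  set w : Fin 4 → ℝ := ![a, 0, 0, -(r ^ 2 + a ^ 2)] with hw
  set e1 : Fin 4 → ℝ := ![0, 1, 0, 0] with he1
  set e2 : Fin 4 → ℝ := ![0, 0, 1, 0] with he2
  set v : Fin 4 → ℝ := ![-((r ^ 2 + a ^ 2) / Δ), 0, 0, -(a / Δ)] with hv
  have hs : Real.sin θ ^ 2 = 1 - Real.cos θ ^ 2 := Real.sin_sq θ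
  have hJ : J = 1 + vecMulVec v e1 := by
    ext i j
    fin_cases i <;> fin_cases j <;>
      simp [J, v, e1, Matrix.one_apply, vecMulVec_apply, Matrix.vecHead, Matrix.vecTail]
  have huv : u ⬝ᵥ v = -(ϱ2 / Δ) := by
    simp only [hu, hv, dotProduct, Fin.sum_univ_four, Matrix.cons_val_zero,
      Matrix.cons_val_one, Matrix.head_cons, Matrix.cons_val_fin_one,
      Matrix.cons_val', Matrix.empty_val', Matrix.cons_val_two, Matrix.cons_val_three, Matrix.tail_cons]
    rw [hϱ2, hs]
    field_simp [show Δ ≠ 0 from hΔ]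
    ring
  have hvu : v ⬝ᵥ u = -(ϱ2 / Δ) := by rw [dotProduct_comm]; exact huv
  have he1v : e1 ⬝ᵥ v = 0 := by simp [he1, hv, dotProduct, Fin.sum_univ_four]
  have he2v : e2 ⬝ᵥ v = 0 := by simp [he2, hv, dotProduct, Fin.sum_univ_four]
  have hwv : w ⬝ᵥ v = 0 := by
    simp only [hw, hv, dotProduct, Fin.sum_univ_four, Matrix.cons_val_zero,
      Matrix.cons_val_one, Matrix.head_cons, Matrix.cons_val_fin_one,
      Matrix.cons_val', Matrix.empty_val', Matrix.cons_val_two, Matrix.cons_val_three, Matrix.tail_cons]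
    field_simp [show Δ ≠ 0 from hΔ]
    ring
  have hA : kerrBL 𝔪 a r θ
      = (Δ / ϱ2) • vecMulVec u u - (ϱ2 / Δ) • vecMulVec e1 e1
        - ϱ2 • vecMulVec e2 e2 - (Real.sin θ ^ 2 / ϱ2) • vecMulVec w w := rfl
  have hB : kerrStar 𝔪 a r θ
      = (Δ / ϱ2) • vecMulVec u u - vecMulVec u e1 - vecMulVec e1 u
        - ϱ2 • vecMulVec e2 e2 - (Real.sin θ ^ 2 / ϱ2) • vecMulVec w w := rfl
  have hΔϱ : (Δ / ϱ2) * -(ϱ2 / Δ) = -1 := by field_simp [show Δ ≠ 0 from hΔ]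
  have step1 : kerrBL 𝔪 a r θ * J = kerrBL 𝔪 a r θ - vecMulVec u e1 := by
    rw [hJ, mul_add, mul_one, hA]
    rw [show ((Δ / ϱ2) • vecMulVec u u - (ϱ2 / Δ) • vecMulVec e1 e1
        - ϱ2 • vecMulVec e2 e2 - (Real.sin θ ^ 2 / ϱ2) • vecMulVec w w)
        * vecMulVec v e1
        = (Δ / ϱ2) • (vecMulVec u u * vecMulVec v e1)
          - (ϱ2 / Δ) • (vecMulVec e1 e1 * vecMulVec v e1)
          - ϱ2 • (vecMulVec e2 e2 * vecMulVec v e1)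
          - (Real.sin θ ^ 2 / ϱ2) • (vecMulVec w w * vecMulVec v e1) by
      simp only [Matrix.sub_mul, Matrix.smul_mul]]
    rw [vmv_mul, vmv_mul, vmv_mul, vmv_mul, huv, he1v, he2v, hwv]
    simp only [zero_smul, smul_zero, sub_zero, smul_smul, hΔϱ, neg_one_smul]
    abel
  have hJT : Jᵀ = 1 + vecMulVec e1 v := by rw [hJ]; simp [vmv_transpose]
  rw [Matrix.mul_assoc, step1, hJT, add_mul, one_mul]
  rw [hA]
  rw [show vecMulVec e1 v *
        ((Δ / ϱ2) • vecMulVec u u - (ϱ2 / Δ) • vecMulVec e1 e1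
          - ϱ2 • vecMulVec e2 e2 - (Real.sin θ ^ 2 / ϱ2) • vecMulVec w w
          - vecMulVec u e1)
      = (Δ / ϱ2) • (vecMulVec e1 v * vecMulVec u u)
        - (ϱ2 / Δ) • (vecMulVec e1 v * vecMulVec e1 e1)
        - ϱ2 • (vecMulVec e1 v * vecMulVec e2 e2)
        - (Real.sin θ ^ 2 / ϱ2) • (vecMulVec e1 v * vecMulVec w w)
        - vecMulVec e1 v * vecMulVec u e1 by
    simp only [Matrix.mul_sub, Matrix.mul_smul]]
  rw [vmv_mul, vmv_mul, vmv_mul, vmv_mul, vmv_mul, hvu, hB]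
  rw [show v ⬝ᵥ e1 = 0 from by simp [hv, he1, dotProduct, Fin.sum_univ_four]]
  rw [show v ⬝ᵥ e2 = 0 from by simp [hv, he2, dotProduct, Fin.sum_univ_four]]
  rw [show v ⬝ᵥ w = 0 from by rw [dotProduct_comm]; exact hwv]
  simp only [zero_smul, smul_zero, sub_zero, smul_smul, hΔϱ, neg_one_smul]
  module
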